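/- arXiv:1912.09104 — 2 statements merged into one kernel-verified Lean document; each statement's English description precedes it below -/
import Mathlib

section
/- In a finite probability space, if the counterfactual outcome Y_x is independent of X given Z (conditional ignorability), and P(X = x, Z = z) > 0 for all z with P(Z = z) > 0, then P(Y_x = y) = Σ_z P(Y = y | X = x, Z = z) · P(Z = z), where Y satisfies the consistency condition Y = Y_x on the event {X = x}. -/
open scoped Classical

/-- Probability of event `E` under weight function `p` on a finite sample space. -/
noncomputable def Pr {Ω : Type*} [Fintype Ω] (p : Ω → ℝ) (E : Ω → Prop) : ℝ :=
  ∑ ω : Ω, if E ω then p ω else 0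

/-- Conditional probability of `E` given `F`. -/
noncomputable def cPr {Ω : Type*} [Fintype Ω] (p : Ω → ℝ) (E F : Ω → Prop) : ℝ :=
  Pr p (fun ω => E ω ∧ F ω) / Pr p F


lemma Pr_nonneg' {Ω : Type*} [Fintype Ω] (p : Ω → ℝ) (hp : ∀ ω, 0 ≤ p ω) (E : Ω → Prop) :
    0 ≤ Pr p E :=
  Finset.sum_nonneg fun ω _ => by by_cases h : E ω <;> simp [h, hp ω]

lemma Pr_mono' {Ω : Type*} [Fintype Ω] (p : Ω → ℝ) (hp : ∀ ω, 0 ≤ p ω) {E F : Ω → Prop}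
    (h : ∀ ω, E ω → F ω) : Pr p E ≤ Pr p F :=
  Finset.sum_le_sum fun ω _ => by by_cases hE : E ω <;> by_cases hF : F ω <;> simp [hE, hF, hp ω] <;> exact (hF (h ω hE)).elim

/-- Adjustment under conditional ignorability and consistency. -/
theorem adjustment_under_ignorability
    {Ω 𝒳 𝒵 𝒴 : Type*} [Fintype Ω] [Fintype 𝒵]
    (p : Ω → ℝ) (hp : ∀ ω, 0 ≤ p ω) (hsum : ∑ ω, p ω = 1)
    (X : Ω → 𝒳) (Z : Ω → 𝒵) (Y : Ω → 𝒴) (Yx : Ω → 𝒴) (x : 𝒳)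
    (hconsistency : ∀ ω, X ω = x → Y ω = Yx ω)
    (hignorability : ∀ (y : 𝒴) (z : 𝒵), 0 < Pr p (fun ω => Z ω = z) →
      cPr p (fun ω => Yx ω = y ∧ X ω = x) (fun ω => Z ω = z)
        = cPr p (fun ω => Yx ω = y) (fun ω => Z ω = z)
          * cPr p (fun ω => X ω = x) (fun ω => Z ω = z))
    (hpos : ∀ z : 𝒵, 0 < Pr p (fun ω => Z ω = z) →
      0 < Pr p (fun ω => X ω = x ∧ Z ω = z))
    (y : 𝒴) :
    Pr p (fun ω => Yx ω = y)
      = ∑ z : 𝒵, cPr p (fun ω => Y ω = y) (fun ω => X ω = x ∧ Z ω = z)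
          * Pr p (fun ω => Z ω = z) := by

  have hpart : Pr p (fun ω => Yx ω = y) = ∑ z : 𝒵, Pr p (fun ω => Yx ω = y ∧ Z ω = z) := by
    unfold Pr
    rw [Finset.sum_comm]
    refine Finset.sum_congr rfl fun ω _ => ?_
    by_cases h : Yx ω = y
    · simp [h, Finset.sum_ite_eq]
    · simp [h]
  rw [hpart]
  refine Finset.sum_congr rfl fun z _ => ?_
  by_cases hz : 0 < Pr p (fun ω => Z ω = z)
  · have hC := hpos z hz
    have hig := hignorability y z hz
    unfold cPr at hig ⊢
    have hYY : Pr p (fun ω => Y ω = y ∧ X ω = x ∧ Z ω = z)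
        = Pr p (fun ω => (Yx ω = y ∧ X ω = x) ∧ Z ω = z) := by
      unfold Pr
      refine Finset.sum_congr rfl fun ω _ => ?_
      by_cases hX : X ω = x
      · simp [hX, hconsistency ω hX, and_assoc]
      · simp [hX]
    rw [hYY]
    set PZ := Pr p (fun ω => Z ω = z) with hPZ
    set A := Pr p (fun ω => (Yx ω = y ∧ X ω = x) ∧ Z ω = z) with hA
    set B := Pr p (fun ω => Yx ω = y ∧ Z ω = z) with hB
    set C := Pr p (fun ω => X ω = x ∧ Z ω = z) with hC2
    field_simp at hig ⊢
    nlinarith [hz, hC, hig]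
  · have hz0 : Pr p (fun ω => Z ω = z) = 0 :=
      le_antisymm (not_lt.mp hz) (Pr_nonneg' p hp _)
    have h1 : Pr p (fun ω => Yx ω = y ∧ Z ω = z) = 0 :=
      le_antisymm (hz0 ▸ Pr_mono' p hp fun ω h => h.2) (Pr_nonneg' p hp _)
    simp [h1, hz0]
end

section
/- Rule 2 of do-calculus in the unconfounded case: if U_X and U_Y are independent and X = f_X(U_X), Y = f_Y(X, U_Y), then intervention equals conditioning: P(Y = y | do(X = x)) = P(Y = y | X = x) for every x with P(X = x) > 0. -/
open scoped Classical

lemma Pr_congr' {Ω : Type*} [Fintype Ω] (p : Ω → ℝ) {E F : Ω → Prop}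
    (h : ∀ ω, E ω ↔ F ω) : Pr p E = Pr p F := by
  unfold Pr; apply Finset.sum_congr rfl; intro ω _; simp [h ω]

lemma pr_comp {Ω α : Type*} [Fintype Ω] (p : Ω → ℝ) (U : Ω → α) (A : α → Prop) :
    Pr p (fun ω => A (U ω)) =
      ∑ b ∈ Finset.image U Finset.univ, if A b then Pr p (fun ω => U ω = b) else 0 := by
  have h : ∀ ω, (if A (U ω) then p ω else 0)
      = ∑ b ∈ Finset.image U Finset.univ, if U ω = b ∧ A b then p ω else 0 := by
    intro ω
    rw [Finset.sum_eq_single (U ω)]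
    · simp
    · intro b _ hb; exact if_neg (fun h => hb h.1.symm)
    · intro h; exact absurd (Finset.mem_image_of_mem U (Finset.mem_univ ω)) h
  unfold Pr
  simp only [h]
  conv_lhs => rw [Finset.sum_comm]
  apply Finset.sum_congr rfl; intro b _
  split_ifs with hA
  · apply Finset.sum_congr rfl; intro ω _; simp [hA]
  · apply Finset.sum_eq_zero; intro ω _; simp [hA]

lemma pr_comp2 {Ω α β : Type*} [Fintype Ω] (p : Ω → ℝ) (U : Ω → α) (V : Ω → β)
    (A : α → Prop) (B : β → Prop) :
    Pr p (fun ω => A (U ω) ∧ B (V ω)) =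
      ∑ b ∈ Finset.image U Finset.univ, ∑ c ∈ Finset.image V Finset.univ,
        if A b ∧ B c then Pr p (fun ω => U ω = b ∧ V ω = c) else 0 := by
  unfold Pr
  beta_reduce
  trans (∑ ω : Ω, ∑ b ∈ Finset.image U Finset.univ, ∑ c ∈ Finset.image V Finset.univ,
      if (U ω = b ∧ V ω = c) ∧ (A b ∧ B c) then p ω else 0)
  · apply Finset.sum_congr rfl; intro ω _
    rw [Finset.sum_eq_single (U ω)]
    · rw [Finset.sum_eq_single (V ω)]
      · simp
      · intro c _ hc; rw [if_neg (fun h => hc h.1.2.symm)]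
      · intro h; exact absurd (Finset.mem_image_of_mem V (Finset.mem_univ ω)) h
    · intro b _ hb
      apply Finset.sum_eq_zero; intro c _
      rw [if_neg (fun h => hb h.1.1.symm)]
    · intro h; exact absurd (Finset.mem_image_of_mem U (Finset.mem_univ ω)) h
  conv_lhs => rw [Finset.sum_comm]
  apply Finset.sum_congr rfl; intro b _
  conv_lhs => rw [Finset.sum_comm]
  apply Finset.sum_congr rfl; intro c _
  split_ifs with hA
  · apply Finset.sum_congr rfl; intro ω _; simp [hA]
  · apply Finset.sum_eq_zero; intro ω _; simp [hA]

lemma indep_pred {Ω α β : Type*} [Fintype Ω] (p : Ω → ℝ) (U : Ω → α) (V : Ω → β)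
    (hindep : ∀ (b : α) (c : β),
      Pr p (fun ω => U ω = b ∧ V ω = c)
        = Pr p (fun ω => U ω = b) * Pr p (fun ω => V ω = c))
    (A : α → Prop) (B : β → Prop) :
    Pr p (fun ω => A (U ω) ∧ B (V ω))
      = Pr p (fun ω => A (U ω)) * Pr p (fun ω => B (V ω)) := by
  rw [pr_comp2 p U V A B, pr_comp p U A, pr_comp p V B, Finset.sum_mul_sum]
  apply Finset.sum_congr rfl; intro b _
  apply Finset.sum_congr rfl; intro c _
  rw [hindep b c]
  split_ifs with h1 h2 h3 <;> simp_all

/-- Rule 2 of do-calculus in the unconfounded case: intervention equals conditioning. -/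
theorem rule2_unconfounded
    {Ω 𝒰X 𝒰Y 𝒳 𝒴 : Type*} [Fintype Ω]
    (p : Ω → ℝ) (hp : ∀ ω, 0 ≤ p ω) (hsum : ∑ ω, p ω = 1)
    (UX : Ω → 𝒰X) (UY : Ω → 𝒰Y)
    (hindep : ∀ (b : 𝒰X) (c : 𝒰Y),
      Pr p (fun ω => UX ω = b ∧ UY ω = c)
        = Pr p (fun ω => UX ω = b) * Pr p (fun ω => UY ω = c))
    (fX : 𝒰X → 𝒳) (fY : 𝒳 → 𝒰Y → 𝒴)
    (X : Ω → 𝒳) (Y : Ω → 𝒴)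
    (hX : ∀ ω, X ω = fX (UX ω))
    (hY : ∀ ω, Y ω = fY (X ω) (UY ω))
    (x : 𝒳) (y : 𝒴)
    (hpos : 0 < Pr p (fun ω => X ω = x)) :
    Pr p (fun ω => fY x (UY ω) = y)
      = cPr p (fun ω => Y ω = y) (fun ω => X ω = x) := by
  have hEv : ∀ ω, (Y ω = y ∧ X ω = x) ↔ (fX (UX ω) = x ∧ fY x (UY ω) = y) := by
    intro ω
    constructor
    · rintro ⟨hy, hx⟩
      refine ⟨(hX ω).symm.trans hx, ?_⟩
      rw [← hx]; rw [hY ω] at hy; exact hy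
    · rintro ⟨hx, hy⟩
      have hx' : X ω = x := (hX ω).trans hx
      exact ⟨(hY ω).trans (by rw [hx']; exact hy), hx'⟩
  have hXev : ∀ ω, (X ω = x) ↔ (fX (UX ω) = x) := fun ω => by rw [hX ω]
  unfold cPr
  rw [Pr_congr' p hEv,
    indep_pred p UX UY hindep (fun b => fX b = x) (fun c => fY x c = y),
    ← Pr_congr' p hXev]
  field_simp
end
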